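/- In the Max Vertex Cover reduction instance, there exists a vertex cover S of size k covering W edges of G if and only if there exists a viable set A of size k' = 2kΓ with PD(A) ≥ W + kΓ. -/

import Mathlib

open scoped Classical

/-- A sink: a vertex with no outgoing edges. -/
def IsSink {X : Type*} (E : X → X → Prop) (x : X) : Prop := ∀ y, ¬ E x y

/-- A set `S` is viable if each member is a sink or has an out-neighbor in `S`. -/
def Viable {X : Type*} (E : X → X → Prop) (S : Finset X) : Prop :=
  ∀ s ∈ S, IsSink E s ∨ ∃ s' ∈ S, E s s'

/-- Food web of the Max Vertex Cover reduction: species are the copies `v_i`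
(left summand) and the auxiliary species `v'_i` (right summand), for `v` a
vertex of `G` and `i < Γ`. Each copy `v_i` depends on the top chain element
`v'_{Γ-1}`, and the chain elements `v'_i` depend on `v'_{i-1}`. -/
def mvcE {V : Type*} {Γ : ℕ} :
    ((V × Fin Γ) ⊕ (V × Fin Γ)) → ((V × Fin Γ) ⊕ (V × Fin Γ)) → Prop
  | Sum.inl (v, _), Sum.inr (v', a) => v = v' ∧ (a : ℕ) = Γ - 1
  | Sum.inr (v, a), Sum.inr (v', b) => v = v' ∧ (a : ℕ) = (b : ℕ) + 1
  | _, _ => False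

/-- Phylogenetic diversity in the reduction instance: each copy `v_i` in `A`
contributes `1` (the weight of the tree edge above it), and each edge `f` of
`G` whose inner tree node has a child `u_i` in `A` (where `f` is the `i`-th
incident edge of `u`, as given by the incidence numbering `ord`) contributes
another `1`; the auxiliary species `v'_i` contribute `0`. -/
noncomputable def mvcPD {V : Type*} [DecidableEq V] {Γ : ℕ}
    (Edges : Finset (Sym2 V)) (ord : V → Sym2 V → Fin Γ)
    (A : Finset ((V × Fin Γ) ⊕ (V × Fin Γ))) : ℕ :=
  (A.filter (fun x => x.isLeft)).card +
    (Edges.filter (fun e => ∃ u : V, ∃ i : Fin Γ,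
      u ∈ e ∧ ord u e = i ∧ Sum.inl (u, i) ∈ A)).card

/-! A vertex set `S` corresponds to the species set made of all copies `v_i` and all chain
species `v'_i` for `v ∈ S`; it is viable and its diversity is `#S * Γ` plus the number of
edges covered by `S`.

Conversely, the food web is a forest of chains, so viability of `A` forces the whole chain
`v'_1, …, v'_Γ` into `A` as soon as one copy `v_i` is in `A`. If `t` vertices have a copy in
`A`, then `A` holds at most `min t (2k - t) * Γ` copies, and the edges counted by `PD(A)` are
covered by these `t` vertices. Trimming them to `k` vertices loses at most `Γ` covered edges
per dropped vertex, which is paid for by the `Γ` copies the budget no longer allows. -/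

open Finset

lemma Finset.card_filter_isLeft {α β : Type*} (u : Finset (α ⊕ β)) :
    #(u.filter (fun x => x.isLeft)) = #u.toLeft := by
  calc #(u.filter (fun x => x.isLeft)) = #(u.toLeft.map (Function.Embedding.inl (β := β))) := by
        congr 1
        ext (x | x) <;> simp
    _ = #u.toLeft := card_map _

lemma Finset.card_le_card_image_fst_mul {α : Type*} [DecidableEq α] {n : ℕ}
    (P : Finset (α × Fin n)) : #P ≤ #(P.image Prod.fst) * n := by
  calc #P ≤ #(P.image Prod.fst ×ˢ (univ : Finset (Fin n))) :=
        card_le_card fun p hp => mem_product.2 ⟨mem_image_of_mem _ hp, mem_univ _⟩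
    _ = #(P.image Prod.fst) * n := by simp

lemma Viable.mem_of_rel {X : Type*} {E : X → X → Prop} (hE : Relator.RightUnique E)
    {S : Finset X} (hS : Viable E S) {x y : X} (hx : x ∈ S) (hxy : E x y) : y ∈ S := by
  obtain hsink | ⟨z, hz, hxz⟩ := hS x hx
  · exact absurd hxy (hsink y)
  · rwa [hE hxy hxz]

section FoodWeb

variable {V : Type*} {Γ : ℕ}

lemma mvcE_rightUnique : Relator.RightUnique (@mvcE V Γ) := by
  rintro (⟨v, i⟩ | ⟨v, i⟩) (⟨u, a⟩ | ⟨u, a⟩) (⟨w, b⟩ | ⟨w, b⟩) hab hac <;>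
    simp only [mvcE] at hab hac <;> simp_all [Fin.ext_iff]

lemma Viable.inr_mem_of_inl_mem {A : Finset ((V × Fin Γ) ⊕ (V × Fin Γ))}
    (hA : Viable mvcE A) {v : V} {i : Fin Γ} (hi : Sum.inl (v, i) ∈ A) (a : Fin Γ) :
    Sum.inr (v, a) ∈ A := by
  have hΓ : 0 < Γ := i.pos
  suffices h : ∀ m (a : Fin Γ), (a : ℕ) + m = Γ - 1 → Sum.inr (v, a) ∈ A from
    h (Γ - 1 - a) a (by omega)
  intro m
  induction m with
  | zero =>
    exact fun a ha => hA.mem_of_rel (y := Sum.inr (v, a)) mvcE_rightUnique hi ⟨rfl, by omega⟩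
  | succ m ih =>
    exact fun a ha =>
      hA.mem_of_rel mvcE_rightUnique (ih ⟨a + 1, by omega⟩ (by simp only; omega)) ⟨rfl, rfl⟩

lemma Viable.card_image_fst_toLeft_mul_le [DecidableEq V]
    {A : Finset ((V × Fin Γ) ⊕ (V × Fin Γ))} (hA : Viable mvcE A) :
    #(A.toLeft.image Prod.fst) * Γ ≤ #A.toRight := by
  calc #(A.toLeft.image Prod.fst) * Γ
        = #(A.toLeft.image Prod.fst ×ˢ (univ : Finset (Fin Γ))) := by simp
    _ ≤ #A.toRight := card_le_card fun p hp => by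
        obtain ⟨hv, -⟩ := mem_product.1 hp
        obtain ⟨⟨v, i⟩, hi, rfl⟩ := mem_image.1 hv
        exact mem_toRight.2 (hA.inr_mem_of_inl_mem (mem_toLeft.1 hi) p.2)

end FoodWeb

section Covering

variable {V : Type*} [DecidableEq V]

def coveredEdges (Edges : Finset (Sym2 V)) (S : Finset V) : Finset (Sym2 V) :=
  Edges.filter (fun e => ∃ v ∈ S, v ∈ e)

variable {Edges : Finset (Sym2 V)}

lemma coveredEdges_mono {S T : Finset V} (h : S ⊆ T) :
    coveredEdges Edges S ⊆ coveredEdges Edges T :=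
  monotone_filter_right _ fun _ _ ⟨v, hv, hve⟩ => ⟨v, h hv, hve⟩

lemma coveredEdges_union (S T : Finset V) :
    coveredEdges Edges (S ∪ T) = coveredEdges Edges S ∪ coveredEdges Edges T := by
  simp only [coveredEdges, ← filter_or, mem_union, or_and_right, exists_or]

lemma card_coveredEdges_le {Γ : ℕ} (hdeg : ∀ v : V, #(Edges.filter (fun e => v ∈ e)) ≤ Γ)
    (S : Finset V) : #(coveredEdges Edges S) ≤ #S * Γ := by
  have hbiUnion : coveredEdges Edges S = S.biUnion (fun v => Edges.filter (fun e => v ∈ e)) := by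
    ext e
    simp only [coveredEdges, mem_filter, mem_biUnion]
    constructor
    · rintro ⟨he, v, hv, hve⟩
      exact ⟨v, hv, he, hve⟩
    · rintro ⟨v, hv, he, hve⟩
      exact ⟨he, v, hv, hve⟩
  calc #(coveredEdges Edges S) ≤ ∑ v ∈ S, #(Edges.filter (fun e => v ∈ e)) :=
        hbiUnion ▸ card_biUnion_le
    _ ≤ #S * Γ := by simpa using sum_le_card_nsmul S _ Γ fun v _ => hdeg v

lemma exists_card_eq_card_coveredEdges_le [Fintype V] {Γ k : ℕ}
    (hdeg : ∀ v : V, #(Edges.filter (fun e => v ∈ e)) ≤ Γ) (hk : k ≤ Fintype.card V)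
    (T : Finset V) :
    ∃ S : Finset V, #S = k ∧
      #(coveredEdges Edges T) ≤ #(coveredEdges Edges S) + (#T - k) * Γ := by
  rcases le_total #T k with hTk | hkT
  · obtain ⟨S, hTS, hS⟩ := exists_superset_card_eq hTk hk
    refine ⟨S, hS, ?_⟩
    simpa [Nat.sub_eq_zero_of_le hTk] using card_le_card (coveredEdges_mono hTS)
  · obtain ⟨S, hST, hS⟩ := exists_subset_card_eq hkT
    refine ⟨S, hS, ?_⟩
    calc #(coveredEdges Edges T) = #(coveredEdges Edges (S ∪ (T \ S))) := by
          rw [union_sdiff_of_subset hST]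
      _ ≤ #(coveredEdges Edges S) + #(coveredEdges Edges (T \ S)) := by
          rw [coveredEdges_union]; exact card_union_le _ _
      _ ≤ #(coveredEdges Edges S) + (#T - k) * Γ := by
          refine Nat.add_le_add_left ((card_coveredEdges_le hdeg _).trans_eq ?_) _
          rw [card_sdiff_of_subset hST, hS]

end Covering

section Diversity

def mvcSpecies {V : Type*} (Γ : ℕ) (S : Finset V) : Finset ((V × Fin Γ) ⊕ (V × Fin Γ)) :=
  (S ×ˢ univ).disjSum (S ×ˢ univ)

variable {V : Type*} {Γ : ℕ}

lemma viable_mvcSpecies (S : Finset V) : Viable mvcE (mvcSpecies Γ S) := by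
  rintro (⟨v, i⟩ | ⟨v, a⟩) hs <;> simp only [mvcSpecies, inl_mem_disjSum, inr_mem_disjSum,
    mem_product, mem_univ, and_true] at hs
  · have := i.isLt
    exact Or.inr ⟨Sum.inr (v, ⟨Γ - 1, by omega⟩), by simp [mvcSpecies, hs], rfl, rfl⟩
  · rcases Nat.eq_zero_or_pos a with h0 | hpos
    · refine Or.inl ?_
      rintro (_ | ⟨w, b⟩) h <;> simp only [mvcE] at h
      omega
    · exact Or.inr ⟨Sum.inr (v, ⟨a - 1, by omega⟩), by simp [mvcSpecies, hs], rfl, by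
        simp only; omega⟩

lemma card_mvcSpecies (S : Finset V) : #(mvcSpecies Γ S) = 2 * #S * Γ := by
  simp only [mvcSpecies, card_disjSum, card_product, card_univ, Fintype.card_fin]
  ring

variable [DecidableEq V] (Edges : Finset (Sym2 V)) (ord : V → Sym2 V → Fin Γ)

lemma mvcPD_mvcSpecies (S : Finset V) :
    mvcPD Edges ord (mvcSpecies Γ S) = #S * Γ + #(coveredEdges Edges S) := by
  rw [mvcPD, card_filter_isLeft]
  congr 1
  · simp [mvcSpecies]
  · congr 1
    ext e
    simp [mvcSpecies, coveredEdges, and_comm]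

lemma mvcPD_le (A : Finset ((V × Fin Γ) ⊕ (V × Fin Γ))) :
    mvcPD Edges ord A ≤ #A.toLeft + #(coveredEdges Edges (A.toLeft.image Prod.fst)) := by
  rw [mvcPD, card_filter_isLeft]
  refine Nat.add_le_add_left (card_le_card (monotone_filter_right _ ?_)) _
  rintro e - ⟨u, i, hue, -, hi⟩
  exact ⟨u, mem_image.2 ⟨(u, i), mem_toLeft.2 hi, rfl⟩, hue⟩

end Diversity

theorem max_vertex_cover_reduction_correct_general {V : Type*} [Fintype V] [DecidableEq V]
    (Edges : Finset (Sym2 V))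
    (Γ k : ℕ)
    (hdeg : ∀ v : V, (Edges.filter (fun e => v ∈ e)).card ≤ Γ)
    (ord : V → Sym2 V → Fin Γ)
    (hk : k ≤ Fintype.card V)
    (W : ℕ) :
    (∃ S : Finset V, S.card = k ∧
        W ≤ (Edges.filter (fun e => ∃ v ∈ S, v ∈ e)).card) ↔
      (∃ A : Finset ((V × Fin Γ) ⊕ (V × Fin Γ)),
        Viable mvcE A ∧ A.card = 2 * k * Γ ∧ W + k * Γ ≤ mvcPD Edges ord A) := by
  constructor
  · rintro ⟨S, rfl, hW⟩
    refine ⟨mvcSpecies Γ S, viable_mvcSpecies S, card_mvcSpecies S, ?_⟩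
    rw [mvcPD_mvcSpecies]
    exact (Nat.add_le_add_right hW _).trans_eq (Nat.add_comm _ _)
  · rintro ⟨A, hA, hcard, hPD⟩
    obtain ⟨S, hS, hcover⟩ :=
      exists_card_eq_card_coveredEdges_le hdeg hk (A.toLeft.image Prod.fst)
    refine ⟨S, hS, ?_⟩
    have hcopies := card_le_card_image_fst_mul A.toLeft
    have hchains := hA.card_image_fst_toLeft_mul_le
    have hsplit := A.card_toLeft_add_card_toRight
    have hdiversity := mvcPD_le Edges ord A
    rw [Nat.sub_mul] at hcover
    rw [mul_assoc] at hcard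
    change W ≤ #(coveredEdges Edges S)
    omega

/-- Correctness of the Max Vertex Cover reduction: for a graph `G` with edge
set `Edges`, maximum degree `Γ`, and an injective incidence numbering `ord`,
there is a set of `k` vertices covering at least `W` edges iff there is a
viable set `A` of size `k' = 2kΓ` with `PD(A) ≥ W + kΓ`. -/
theorem max_vertex_cover_reduction_correct {V : Type*} [Fintype V] [DecidableEq V]
    (Edges : Finset (Sym2 V)) (hloopfree : ∀ e ∈ Edges, ¬ e.IsDiag)
    (Γ k : ℕ) (hΓ : 1 ≤ Γ)
    (hdeg : ∀ v : V, (Edges.filter (fun e => v ∈ e)).card ≤ Γ)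
    (ord : V → Sym2 V → Fin Γ)
    (hord : ∀ v : V, ∀ e ∈ Edges, ∀ e' ∈ Edges,
      v ∈ e → v ∈ e' → ord v e = ord v e' → e = e')
    (hk : k ≤ Fintype.card V)
    (W : ℕ) :
    (∃ S : Finset V, S.card = k ∧
        W ≤ (Edges.filter (fun e => ∃ v ∈ S, v ∈ e)).card) ↔
      (∃ A : Finset ((V × Fin Γ) ⊕ (V × Fin Γ)),
        Viable mvcE A ∧ A.card = 2 * k * Γ ∧ W + k * Γ ≤ mvcPD Edges ord A) :=
  max_vertex_cover_reduction_correct_general Edges Γ k hdeg ord hk W
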